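/- Let a > 0 and b > 0. For every c ∈ ℝ there exists a unique x > 0 satisfying π x^{−1/2} e^{ax} Erfc(√(ax)) = b x + c; moreover e^{ax}Erfc(√(ax)) > 0 for all x > 0, so Erfc has no zero on the positive real axis. -/
import Mathlib


open MeasureTheory Set Real

/-- The complementary error function `Erfc(t) = (2/√π) ∫_t^∞ e^{−s²} ds`. -/
noncomputable def Erfc (t : ℝ) : ℝ := 2 / Real.sqrt π * ∫ s in Ioi t, Real.exp (-s ^ 2)

lemma gauss_integrable : Integrable (fun s : ℝ => Real.exp (-s ^ 2)) := by
  simpa using integrable_exp_neg_mul_sq (b := 1) one_pos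

lemma shift_int (t : ℝ) (f : ℝ → ℝ) :
    ∫ s in Ioi t, f s = ∫ u in Ioi (0:ℝ), f (u + t) := by
  have hmp : MeasurePreserving (fun u : ℝ => u + t) volume volume :=
    measurePreserving_add_right volume t
  have hemb : MeasurableEmbedding (fun u : ℝ => u + t) :=
    (MeasurableEquiv.addRight t).measurableEmbedding
  have hpre : (fun u : ℝ => u + t) ⁻¹' Ioi t = Ioi 0 := by
    ext u; simp
  rw [← hpre, hmp.setIntegral_preimage_emb hemb]

noncomputable def hfun (t : ℝ) : ℝ := ∫ u in Ioi (0:ℝ), Real.exp (-u^2 - 2*t*u)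

lemma hfun_integrand_eq (t u : ℝ) :
    Real.exp (t^2) * Real.exp (-(u+t)^2) = Real.exp (-u^2 - 2*t*u) := by
  rw [← Real.exp_add]; ring_nf

lemma hfun_integrableOn (t : ℝ) :
    IntegrableOn (fun u : ℝ => Real.exp (-u^2 - 2*t*u)) (Ioi 0) := by
  have h1 : IntegrableOn (fun u : ℝ => Real.exp (-(u+t)^2)) (Ioi 0) := by
    have := gauss_integrable.comp_add_right t
    exact this.integrableOn
  have h2 : IntegrableOn (fun u : ℝ => Real.exp (t^2) * Real.exp (-(u+t)^2)) (Ioi 0) := h1.const_mul (Real.exp (t^2))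
  exact h2.congr_fun (fun u _ => hfun_integrand_eq t u) measurableSet_Ioi

lemma hfun_eq (t : ℝ) :
    Real.exp (t^2) * ∫ s in Ioi t, Real.exp (-s^2) = hfun t := by
  rw [shift_int t (fun s => Real.exp (-s^2)), hfun, ← integral_const_mul]
  exact setIntegral_congr_fun measurableSet_Ioi fun u _ => hfun_integrand_eq t u

lemma hfun_pos (t : ℝ) : 0 < hfun t := by
  rw [hfun]
  rw [setIntegral_pos_iff_support_of_nonneg_ae (ae_of_all _ fun u => (Real.exp_pos (-u^2-2*t*u)).le) (hfun_integrableOn t)]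
  · have : Function.support (fun u : ℝ => Real.exp (-u^2 - 2*t*u)) = univ := by
      ext u; simp [Function.mem_support, (Real.exp_pos _).ne']
    rw [this, univ_inter]
    simp [Real.volume_Ioi]

lemma hfun_lt (t₁ t₂ : ℝ) (h : t₁ < t₂) : hfun t₂ < hfun t₁ := by
  have key : 0 < ∫ u in Ioi (0:ℝ),
      (Real.exp (-u^2 - 2*t₁*u) - Real.exp (-u^2 - 2*t₂*u)) := by
    have hnn : (0:ℝ→ℝ) ≤ᵐ[volume.restrict (Ioi 0)]
        fun u : ℝ => Real.exp (-u^2 - 2*t₁*u) - Real.exp (-u^2 - 2*t₂*u) := by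
      refine (ae_restrict_iff' measurableSet_Ioi).2 (ae_of_all _ fun u hu => ?_)
      have : Real.exp (-u^2 - 2*t₂*u) ≤ Real.exp (-u^2 - 2*t₁*u) := by
        apply Real.exp_le_exp.2
        nlinarith [mem_Ioi.1 hu]
      simp only [Pi.zero_apply]
      linarith
    rw [setIntegral_pos_iff_support_of_nonneg_ae hnn
      (((hfun_integrableOn t₁).sub (hfun_integrableOn t₂)))]
    · have hsub : Ioi (0:ℝ) ⊆ Function.support
          (fun u : ℝ => Real.exp (-u^2 - 2*t₁*u) - Real.exp (-u^2 - 2*t₂*u)) := by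
        intro u hu
        have : Real.exp (-u^2 - 2*t₂*u) < Real.exp (-u^2 - 2*t₁*u) := by
          apply Real.exp_lt_exp.2
          have : 2*t₁*u < 2*t₂*u := by nlinarith [mem_Ioi.1 hu]
          linarith
        simp [Function.mem_support]
        intro h'
        linarith
      have : volume (Function.support
          (fun u : ℝ => Real.exp (-u^2 - 2*t₁*u) - Real.exp (-u^2 - 2*t₂*u)) ∩ Ioi 0)
          = volume (Ioi (0:ℝ)) := by
        congr 1
        exact inter_eq_right.2 hsub
      rw [this]
      simp [Real.volume_Ioi]
  have := integral_sub (hfun_integrableOn t₁) (hfun_integrableOn t₂)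
  rw [hfun, hfun]
  rw [this] at key
  linarith

lemma exp_mul_erfc (t : ℝ) :
    Real.exp (t^2) * Erfc t = 2 / Real.sqrt π * hfun t := by
  rw [Erfc, ← hfun_eq]; ring

lemma erfc_pos (t : ℝ) : 0 < Erfc t := by
  have h1 : 0 < 2 / Real.sqrt π * hfun t :=
    mul_pos (by positivity) (hfun_pos t)
  rw [← exp_mul_erfc] at h1
  nlinarith [Real.exp_pos (t^2)]

lemma erfc_continuous : Continuous Erfc := by
  have hint : Integrable (fun s : ℝ => Real.exp (-s ^ 2)) := gauss_integrable
  have key : ∀ t : ℝ, (∫ s in Ioi t, Real.exp (-s ^ 2)) =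
      (∫ s in Ioi (0:ℝ), Real.exp (-s ^ 2)) - ∫ s in (0:ℝ)..t, Real.exp (-s ^ 2) := by
    intro t
    have h0 := intervalIntegral.integral_Iic_add_Ioi (b := (0:ℝ))
      (f := fun s : ℝ => Real.exp (-s ^ 2)) hint.integrableOn hint.integrableOn
    have h1 := intervalIntegral.integral_Iic_add_Ioi (b := t) hint.integrableOn hint.integrableOn
    have h2 := intervalIntegral.integral_Iic_sub_Iic (a := (0:ℝ)) (b := t)
      hint.integrableOn hint.integrableOn
    linarith
  have : Erfc = fun t => 2 / Real.sqrt π *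
      ((∫ s in Ioi (0:ℝ), Real.exp (-s ^ 2)) - ∫ s in (0:ℝ)..t, Real.exp (-s ^ 2)) := by
    funext t; rw [Erfc, key]
  rw [this]
  exact continuous_const.mul (continuous_const.sub
    (hint.continuous_primitive 0))

lemma hfun_le {t₁ t₂ : ℝ} (h : t₁ ≤ t₂) : hfun t₂ ≤ hfun t₁ := by
  rcases eq_or_lt_of_le h with rfl | h
  · exact le_refl _
  · exact (hfun_lt _ _ h).le

noncomputable def gfun (a : ℝ) (x : ℝ) : ℝ :=
  π / Real.sqrt x * Real.exp (a * x) * Erfc (Real.sqrt (a * x))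

lemma gfun_repr {a x : ℝ} (ha : 0 < a) (hx : 0 < x) :
    gfun a x = π / Real.sqrt x * (2 / Real.sqrt π * hfun (Real.sqrt (a * x))) := by
  have hax : 0 ≤ a * x := by positivity
  have : Real.exp (a * x) = Real.exp ((Real.sqrt (a * x))^2) := by
    rw [Real.sq_sqrt hax]
  rw [gfun, mul_assoc, this, exp_mul_erfc]

lemma gfun_anti {a : ℝ} (ha : 0 < a) {x₁ x₂ : ℝ} (h1 : 0 < x₁) (h12 : x₁ < x₂) :
    gfun a x₂ < gfun a x₁ := by
  have h2 : 0 < x₂ := h1.trans h12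
  rw [gfun_repr ha h1, gfun_repr ha h2]
  have hs : Real.sqrt (a * x₁) < Real.sqrt (a * x₂) :=
    Real.sqrt_lt_sqrt (by positivity) (by nlinarith)
  have hh := hfun_lt _ _ hs
  have hd : π / Real.sqrt x₂ < π / Real.sqrt x₁ := by
    apply div_lt_div_of_pos_left Real.pi_pos (Real.sqrt_pos.2 h1)
    exact Real.sqrt_lt_sqrt h1.le h12
  apply mul_lt_mul'' hd
  · exact mul_lt_mul_of_pos_left hh (by positivity)
  · positivity
  · exact le_of_lt (mul_pos (by positivity) (hfun_pos _))

lemma gfun_continuousOn (a : ℝ) : ContinuousOn (gfun a) (Ioi 0) := by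
  apply ContinuousOn.mul
  apply ContinuousOn.mul
  · exact continuousOn_const.div Real.continuous_sqrt.continuousOn
      (fun x hx => (Real.sqrt_pos.2 (mem_Ioi.1 hx)).ne')
  · exact (Real.continuous_exp.comp (continuous_const.mul continuous_id)).continuousOn
  · exact (erfc_continuous.comp
      (Real.continuous_sqrt.comp (continuous_const.mul continuous_id))).continuousOn

lemma gfun_lower {a : ℝ} (ha : 0 < a) {x : ℝ} (hx : 0 < x) (hx1 : x ≤ 1) :
    π * (2 / Real.sqrt π * hfun (Real.sqrt a)) / Real.sqrt x ≤ gfun a x := by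
  rw [gfun_repr ha hx]
  have hs : Real.sqrt (a * x) ≤ Real.sqrt a :=
    Real.sqrt_le_sqrt (by nlinarith)
  have hh : hfun (Real.sqrt a) ≤ hfun (Real.sqrt (a * x)) := hfun_le hs
  have h1 : 2 / Real.sqrt π * hfun (Real.sqrt a)
      ≤ 2 / Real.sqrt π * hfun (Real.sqrt (a * x)) :=
    mul_le_mul_of_nonneg_left hh (by positivity)
  calc π * (2 / Real.sqrt π * hfun (Real.sqrt a)) / Real.sqrt x
      = π / Real.sqrt x * (2 / Real.sqrt π * hfun (Real.sqrt a)) := by ring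
    _ ≤ π / Real.sqrt x * (2 / Real.sqrt π * hfun (Real.sqrt (a * x))) :=
        mul_le_mul_of_nonneg_left h1 (by positivity)

lemma gfun_upper {a : ℝ} (ha : 0 < a) {x : ℝ} (hx : 1 ≤ x) :
    gfun a x ≤ π * (2 / Real.sqrt π * hfun 0) := by
  have hx0 : 0 < x := lt_of_lt_of_le one_pos hx
  rw [gfun_repr ha hx0]
  have h1 : π / Real.sqrt x ≤ π := by
    apply div_le_self Real.pi_pos.le
    rw [show (1:ℝ) = Real.sqrt 1 by simp]
    exact Real.sqrt_le_sqrt hx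
  have h2 : 2 / Real.sqrt π * hfun (Real.sqrt (a * x))
      ≤ 2 / Real.sqrt π * hfun 0 :=
    mul_le_mul_of_nonneg_left (hfun_le (Real.sqrt_nonneg _)) (by positivity)
  exact mul_le_mul h1 h2 (le_of_lt (mul_pos (by positivity) (hfun_pos _)))
    Real.pi_pos.le

/-- For `a, b > 0` and any `c`, the equation `π x^{−1/2} e^{ax} Erfc(√(ax)) = b x + c`
has a unique positive solution; moreover `e^{ax} Erfc(√(ax)) > 0` for all `x > 0`,
so `Erfc` has no zero on the positive real axis. -/
theorem stmt_18 (a b : ℝ) (ha : 0 < a) (hb : 0 < b) (c : ℝ) :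
    (∃! x : ℝ, 0 < x ∧
      π / Real.sqrt x * Real.exp (a * x) * Erfc (Real.sqrt (a * x)) = b * x + c) ∧
    (∀ x : ℝ, 0 < x → 0 < Real.exp (a * x) * Erfc (Real.sqrt (a * x))) ∧
    (∀ t : ℝ, 0 < t → Erfc t ≠ 0) := by
  refine ⟨?_, fun x _ => mul_pos (Real.exp_pos _) (erfc_pos _),
    fun t _ => (erfc_pos t).ne'⟩
  set K := π * (2 / Real.sqrt π * hfun (Real.sqrt a)) with hKdef
  have hK : 0 < K := mul_pos Real.pi_pos (mul_pos (by positivity) (hfun_pos _))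
  set D := b + |c| + 1 with hDdef
  have hD : 0 < D := by have := abs_nonneg c; positivity
  set x₀ := min 1 ((K / D) ^ 2) with hx₀def
  have hx₀pos : 0 < x₀ := lt_min one_pos (by positivity)
  have hx₀le1 : x₀ ≤ 1 := min_le_left _ _
  have hsx₀ : Real.sqrt x₀ ≤ K / D := by
    calc Real.sqrt x₀ ≤ Real.sqrt ((K / D) ^ 2) :=
          Real.sqrt_le_sqrt (min_le_right _ _)
      _ = K / D := Real.sqrt_sq (by positivity)
  have hgx₀ : D ≤ gfun a x₀ := by
    have h1 : D ≤ K / Real.sqrt x₀ := by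
      rw [le_div_iff₀ (Real.sqrt_pos.2 hx₀pos)]
      calc D * Real.sqrt x₀ ≤ D * (K / D) :=
            mul_le_mul_of_nonneg_left hsx₀ hD.le
        _ = K := by field_simp
    exact h1.trans (gfun_lower ha hx₀pos hx₀le1)
  have hFx₀ : b * x₀ + c < gfun a x₀ := by
    have : b * x₀ ≤ b := by nlinarith
    have hc : c ≤ |c| := le_abs_self c
    calc b * x₀ + c < D := by rw [hDdef]; linarith
      _ ≤ gfun a x₀ := hgx₀
  set M := π * (2 / Real.sqrt π * hfun 0) with hMdef
  have hM : 0 < M := mul_pos Real.pi_pos (mul_pos (by positivity) (hfun_pos _))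
  set x₁ := max (x₀ + 1) ((M + |c| + 1) / b) with hx₁def
  have hx₀₁ : x₀ < x₁ := lt_of_lt_of_le (lt_add_one x₀) (le_max_left _ _)
  have hx₁ge1 : 1 ≤ x₁ := by
    have : (1:ℝ) ≤ x₀ + 1 := by linarith
    exact this.trans (le_max_left _ _)
  have hFx₁ : gfun a x₁ < b * x₁ + c := by
    have h1 : gfun a x₁ ≤ M := gfun_upper ha hx₁ge1
    have h2 : (M + |c| + 1) / b ≤ x₁ := le_max_right _ _
    have h3 : M + |c| + 1 ≤ b * x₁ := by
      rw [div_le_iff₀ hb] at h2; linarith [h2]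
    have hc : -|c| ≤ c := neg_abs_le c
    linarith
  set F := fun x => gfun a x - (b * x + c) with hFdef
  have hFcont : ContinuousOn F (Icc x₀ x₁) := by
    apply ContinuousOn.sub
    · exact (gfun_continuousOn a).mono fun y hy =>
        mem_Ioi.2 (lt_of_lt_of_le hx₀pos hy.1)
    · exact ((continuous_const.mul continuous_id).add continuous_const).continuousOn
  have hmem : (0:ℝ) ∈ Icc (F x₁) (F x₀) := by
    constructor
    · simp only [hFdef]; linarith
    · simp only [hFdef]; linarith
  obtain ⟨x, hxIcc, hFx⟩ := intermediate_value_Icc' hx₀₁.le hFcont hmem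
  have hxpos : 0 < x := lt_of_lt_of_le hx₀pos hxIcc.1
  have hxeq : gfun a x = b * x + c := by
    simp only [hFdef] at hFx; linarith
  refine ⟨x, ⟨hxpos, hxeq⟩, ?_⟩
  rintro y ⟨hypos, hyeq⟩
  have hyeq' : gfun a y = b * y + c := hyeq
  by_contra hne
  rcases lt_or_gt_of_ne hne with h | h
  · have := gfun_anti ha hypos h
    rw [hxeq, hyeq'] at this
    linarith [mul_lt_mul_of_pos_left h hb]
  · have := gfun_anti ha hxpos h
    rw [hxeq, hyeq'] at this
    linarith [mul_lt_mul_of_pos_left h hb]
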